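/- The operator P₂ : Dom(P₂) ⊂ C₂(Ḡ) → C₂(Ḡ), defined by P₂u = Δu on Dom(P₂) = {u ∈ C₂(Ḡ) : Δu ∈ C₂(Ḡ)} (with Δu understood in the sense of distributions), admits a closure P̄₂ : Dom(P̄₂) ⊂ C₂(Ḡ) → C₂(Ḡ) as an unbounded operator in the Banach space C₂(Ḡ). -/

import Mathlib

open MeasureTheory Metric Set Filter Topology BoundedContinuousFunction

noncomputable section

/-- The plane `ℝ²`. -/
abbrev E2 := EuclideanSpace ℝ (Fin 2)

/-- The Laplacian of a function `φ : ℝ² → ℝ`. -/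
def lap (φ : E2 → ℝ) (x : E2) : ℝ :=
  ∑ i : Fin 2,
    fderiv ℝ (fun y => fderiv ℝ φ y (EuclideanSpace.single i 1)) x (EuclideanSpace.single i 1)

/-- `f` is the Laplacian of `u` on the open set `G` in the sense of distributions. -/
def IsDistLaplacianOn (G : Set E2) (u f : E2 → ℝ) : Prop :=
  ∀ φ : E2 → ℝ, ContDiff ℝ (⊤ : ℕ∞) φ → HasCompactSupport φ → tsupport φ ⊆ G →
    ∫ x in G, u x * lap φ x = ∫ x in G, f x * φ x

/-- Extension by zero (to the whole plane) of a function defined on `closure G`. -/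
def extendByZero (G : Set E2) (u : ↥(closure G) →ᵇ ℝ) : E2 → ℝ :=
  Function.extend Subtype.val (⇑u) 0

/-- `Γ` is a smooth (`C^∞`) regular simple curve. -/
def IsSmoothCurve (Γ : Set E2) : Prop :=
  ∃ γ : ℝ → E2, ContDiff ℝ (⊤ : ℕ∞) γ ∧ InjOn γ (Ioo 0 1) ∧
    (∀ t ∈ Ioo (0 : ℝ) 1, deriv γ t ≠ 0) ∧ γ '' Ioo 0 1 = Γ

/-- Near the point `g`, the region `G` coincides with a plane angle of opening `π`
(i.e. with a half-plane whose boundary line passes through `g`). -/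
def HasFlatAngleAt (G : Set E2) (g : E2) (ε : ℝ) : Prop :=
  ∃ ν : E2, ν ≠ 0 ∧ G ∩ ball g ε = {x | 0 < (inner ℝ ν (x - g) : ℝ)} ∩ ball g ε

/-- `Ω` is a smooth nondegenerate transformation (injective with everywhere
invertible differential) defined on a neighborhood of the curve `closure Γ`. -/
def IsSmoothNondegOn (Ω : E2 → E2) (Γ : Set E2) : Prop :=
  ∃ U : Set E2, IsOpen U ∧ closure Γ ⊆ U ∧ ContDiffOn ℝ (⊤ : ℕ∞) Ω U ∧
    InjOn Ω U ∧ ∀ y ∈ U, LinearMap.det ((fderiv ℝ Ω y) : E2 →ₗ[ℝ] E2) ≠ 0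

/-- `b ∈ C^∞(closure Γ)`: `b` is smooth on a neighborhood of `closure Γ`. -/
def IsSmoothOnCl (b : E2 → ℝ) (Γ : Set E2) : Prop :=
  ∃ U : Set E2, IsOpen U ∧ closure Γ ⊆ U ∧ ContDiffOn ℝ (⊤ : ℕ∞) b U

/-- The geometric data of Example 2: a bounded plane region `G` with smooth boundary
`∂G = Γ₁ ∪ Γ₂ ∪ {g₁, g₂}`, coinciding with a plane angle of opening `π` near `g₁, g₂`,
coefficients `b₁, b₂` and smooth nondegenerate transformations `Ω₁, Ω₂` mapping `Γ₁, Γ₂`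
into `G`, with `Ω₁(g₁) ≠ Ω₂(g₁)`, each equal near `g₁` to a rotation about `g₁`
composed with a shift. -/
structure Setting2 where
  /-- the region -/
  G : Set E2
  /-- the boundary arcs -/
  Γ₁ : Set E2
  Γ₂ : Set E2
  /-- the conjugation points, `𝒦 = {g₁, g₂}` -/
  g₁ : E2
  g₂ : E2
  ε : ℝ
  hG_open : IsOpen G
  hG_conn : IsConnected G
  hG_bdd : Bornology.IsBounded G
  hg_ne : g₁ ≠ g₂
  /-- `∂G = Γ₁ ∪ Γ₂ ∪ 𝒦` -/
  hbdry : frontier G = Γ₁ ∪ Γ₂ ∪ {g₁, g₂}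
  /-- `Γ₁ ∩ Γ₂ = ∅` -/
  hΓ_disj : Γ₁ ∩ Γ₂ = ∅
  hK_disj : ({g₁, g₂} : Set E2) ∩ (Γ₁ ∪ Γ₂) = ∅
  /-- `closure Γ₁ ∩ closure Γ₂ = 𝒦` -/
  hΓcl : closure Γ₁ ∩ closure Γ₂ = {g₁, g₂}
  /-- `Γ₁`, `Γ₂` are open in the topology of `∂G` -/
  hΓ₁_open : ∃ V : Set E2, IsOpen V ∧ Γ₁ = V ∩ frontier G
  hΓ₂_open : ∃ V : Set E2, IsOpen V ∧ Γ₂ = V ∩ frontier G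
  hΓ₁_conn : IsConnected Γ₁
  hΓ₂_conn : IsConnected Γ₂
  hΓ₁_curve : IsSmoothCurve Γ₁
  hΓ₂_curve : IsSmoothCurve Γ₂
  hε : 0 < ε
  /-- `G` coincides with a plane angle of opening `π` near `g₁` and `g₂` -/
  hangle₁ : HasFlatAngleAt G g₁ ε
  hangle₂ : HasFlatAngleAt G g₂ ε
  /-- the coefficients in the nonlocal conditions -/
  b₁ : E2 → ℝ
  b₂ : E2 → ℝ
  /-- the transformations in the nonlocal conditions -/
  Ω₁ : E2 → E2
  Ω₂ : E2 → E2
  hb₁_smooth : IsSmoothOnCl b₁ Γ₁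
  hb₂_smooth : IsSmoothOnCl b₂ Γ₂
  hb₁_range : ∀ y ∈ closure Γ₁, 0 ≤ b₁ y ∧ b₁ y ≤ 1
  hb₂_range : ∀ y ∈ closure Γ₂, 0 ≤ b₂ y ∧ b₂ y ≤ 1
  /-- `b₁ = b₂ = b* > 0` on `𝒪_{ε/2}(g₁)` -/
  hb_const : ∃ bstar : ℝ, 0 < bstar ∧
    (∀ y ∈ closure Γ₁ ∩ ball g₁ (ε / 2), b₁ y = bstar) ∧
    (∀ y ∈ closure Γ₂ ∩ ball g₁ (ε / 2), b₂ y = bstar)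
  /-- `b₁, b₂ = 0` outside `𝒪_ε(g₁)` -/
  hb₁_zero : ∀ y ∈ closure Γ₁, y ∉ ball g₁ ε → b₁ y = 0
  hb₂_zero : ∀ y ∈ closure Γ₂, y ∉ ball g₁ ε → b₂ y = 0
  hΩ₁_nondeg : IsSmoothNondegOn Ω₁ Γ₁
  hΩ₂_nondeg : IsSmoothNondegOn Ω₂ Γ₂
  /-- `Ω_j(Γ_j) ⊆ G` -/
  hΩ₁_maps : Ω₁ '' Γ₁ ⊆ G
  hΩ₂_maps : Ω₂ '' Γ₂ ⊆ G
  /-- `Ω_j(g₁) ∈ G` -/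
  hΩ₁_g₁ : Ω₁ g₁ ∈ G
  hΩ₂_g₁ : Ω₂ g₁ ∈ G
  /-- `Ω₁(g₁) ≠ Ω₂(g₁)` -/
  hΩ_ne : Ω₁ g₁ ≠ Ω₂ g₁
  /-- on `𝒪_ε(g₁)`, each `Ω_j` is the composition of a rotation about `g₁` and a shift -/
  hΩ₁_rot : ∃ (R : E2 ≃ₗᵢ[ℝ] E2) (v : E2), R.toLinearEquiv.det = 1 ∧
    ∀ y ∈ ball g₁ ε, Ω₁ y = g₁ + v + R (y - g₁)
  hΩ₂_rot : ∃ (R : E2 ≃ₗᵢ[ℝ] E2) (v : E2), R.toLinearEquiv.det = 1 ∧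
    ∀ y ∈ ball g₁ ε, Ω₂ y = g₁ + v + R (y - g₁)
  -- inclusions (consequences of the above) needed to state the nonlocal conditions
  hΓ₁cl_sub : closure Γ₁ ⊆ closure G
  hΓ₂_sub : Γ₂ ⊆ closure G
  hΩ₁_sub : ∀ y ∈ closure Γ₁, Ω₁ y ∈ closure G
  hΩ₂_sub : ∀ y ∈ Γ₂, Ω₂ y ∈ closure G

/-- The space `C₂(Ḡ)`: continuous functions `u` on `closure G` satisfying the nonlocal
conditions `u(y) - b₁(y) u(Ω₁(y)) = 0` for `y ∈ closure Γ₁` and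
`u(y) - b₂(y) u(Ω₂(y)) = 0` for `y ∈ Γ₂`. -/
def Setting2.C2 (S : Setting2) : Set (↥(closure S.G) →ᵇ ℝ) :=
  {u | (∀ y, ∀ hy : y ∈ closure S.Γ₁,
          u ⟨y, S.hΓ₁cl_sub hy⟩ - S.b₁ y * u ⟨S.Ω₁ y, S.hΩ₁_sub y hy⟩ = 0) ∧
       (∀ y, ∀ hy : y ∈ S.Γ₂,
          u ⟨y, S.hΓ₂_sub hy⟩ - S.b₂ y * u ⟨S.Ω₂ y, S.hΩ₂_sub y hy⟩ = 0)}

/-- The graph of the operator `P₂ : Dom(P₂) ⊆ C₂(Ḡ) → C₂(Ḡ)`, `P₂ u = Δu` on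
`Dom(P₂) = {u ∈ C₂(Ḡ) : Δu ∈ C₂(Ḡ)}`, the Laplacian taken in the sense of distributions. -/
def Setting2.graphP (S : Setting2) :
    Set ((↥(closure S.G) →ᵇ ℝ) × (↥(closure S.G) →ᵇ ℝ)) :=
  {p | p.1 ∈ S.C2 ∧ p.2 ∈ S.C2 ∧
    IsDistLaplacianOn S.G (extendByZero S.G p.1) (extendByZero S.G p.2)}

/-
The relation "`f` is the distributional Laplacian of `u`" is an intersection, over test functions
`φ`, of conditions `∫_G u Δφ = ∫_G f φ`, each of which is continuous in `(u, f)` for the sup norm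
since `G` is bounded. Hence the graph closure still consists of pairs with `Δu = f` in the sense
of distributions, and a distribution determines a continuous function on the open set `G`, which
in turn determines its continuous extension to `closure G`.
-/

section ExtendByZero

variable {G : Set E2}

lemma extendByZero_of_mem (u : ↥(closure G) →ᵇ ℝ) {x : E2} (hx : x ∈ closure G) :
    extendByZero G u x = u ⟨x, hx⟩ :=
  Subtype.val_injective.extend_apply (⇑u) 0 ⟨x, hx⟩

lemma extendByZero_of_notMem (u : ↥(closure G) →ᵇ ℝ) {x : E2} (hx : x ∉ closure G) :
    extendByZero G u x = 0 :=
  Function.extend_apply' _ _ _ fun ⟨a, ha⟩ => hx (ha ▸ a.2)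

lemma norm_extendByZero_le (u : ↥(closure G) →ᵇ ℝ) (x : E2) :
    ‖extendByZero G u x‖ ≤ ‖u‖ := by
  by_cases hx : x ∈ closure G
  · rw [extendByZero_of_mem u hx]; exact u.norm_coe_le_norm _
  · rw [extendByZero_of_notMem u hx, norm_zero]; exact norm_nonneg u

lemma extendByZero_sub (u v : ↥(closure G) →ᵇ ℝ) :
    extendByZero G (u - v) = extendByZero G u - extendByZero G v := by
  funext x
  by_cases hx : x ∈ closure G
  · simp only [Pi.sub_apply, extendByZero_of_mem _ hx, BoundedContinuousFunction.coe_sub]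
  · simp only [Pi.sub_apply, extendByZero_of_notMem _ hx, sub_zero]

lemma continuousOn_extendByZero (u : ↥(closure G) →ᵇ ℝ) :
    ContinuousOn (extendByZero G u) (closure G) := by
  rw [continuousOn_iff_continuous_domRestrict]
  convert u.continuous using 1
  funext a
  exact extendByZero_of_mem u a.2

lemma integrableOn_extendByZero_mul (hG : MeasurableSet G) (u : ↥(closure G) →ᵇ ℝ)
    {ψ : E2 → ℝ} (hψ : IntegrableOn ψ G) :
    IntegrableOn (fun x => extendByZero G u x * ψ x) G :=
  hψ.bdd_mul (((continuousOn_extendByZero u).mono subset_closure).aestronglyMeasurable hG)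
    (ae_of_all _ (norm_extendByZero_le u))

lemma integrableOn_extendByZero (hG : MeasurableSet G) (hGb : Bornology.IsBounded G)
    (u : ↥(closure G) →ᵇ ℝ) : IntegrableOn (extendByZero G u) G := by
  simpa using integrableOn_extendByZero_mul hG u
    (integrableOn_const (C := (1 : ℝ)) hGb.measure_lt_top.ne)

lemma lipschitzWith_setIntegral_extendByZero_mul (hG : MeasurableSet G) {ψ : E2 → ℝ}
    (hψ : IntegrableOn ψ G) :
    LipschitzWith (∫ x in G, ‖ψ x‖).toNNReal
      fun u : ↥(closure G) →ᵇ ℝ => ∫ x in G, extendByZero G u x * ψ x := by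
  refine LipschitzWith.of_dist_le_mul fun u v => ?_
  rw [Real.dist_eq, Real.coe_toNNReal _ (integral_nonneg fun _ => norm_nonneg _), dist_eq_norm,
    ← integral_sub (integrableOn_extendByZero_mul hG u hψ) (integrableOn_extendByZero_mul hG v hψ),
    ← Real.norm_eq_abs, mul_comm, ← integral_const_mul]
  refine norm_integral_le_of_norm_le (hψ.norm.const_mul _) (ae_of_all _ fun x => ?_)
  calc ‖extendByZero G u x * ψ x - extendByZero G v x * ψ x‖
      = ‖extendByZero G (u - v) x‖ * ‖ψ x‖ := by
        rw [← sub_mul, extendByZero_sub, Pi.sub_apply, norm_mul]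
    _ ≤ ‖u - v‖ * ‖ψ x‖ := by gcongr; exact norm_extendByZero_le _ x

lemma eq_of_eqOn_extendByZero {u v : ↥(closure G) →ᵇ ℝ}
    (h : EqOn (extendByZero G u) (extendByZero G v) G) : u = v := by
  have hdense : Dense (Subtype.val ⁻¹' G : Set ↥(closure G)) := by
    rw [Subtype.dense_iff, Subtype.image_preimage_coe,
      inter_eq_self_of_subset_right subset_closure]
  refine DFunLike.coe_injective (Continuous.ext_on hdense u.continuous v.continuous fun a ha => ?_)
  have hxa := h ha
  rwa [extendByZero_of_mem u (subset_closure ha), extendByZero_of_mem v (subset_closure ha)] at hxa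

end ExtendByZero

lemma continuous_lap {φ : E2 → ℝ} (hφ : ContDiff ℝ (⊤ : ℕ∞) φ) : Continuous (lap φ) := by
  refine continuous_finsetSum _ fun i _ => ?_
  have hφi : ContDiff ℝ (⊤ : ℕ∞) (fun y => fderiv ℝ φ y (EuclideanSpace.single i 1)) :=
    (hφ.fderiv_right (m := (⊤ : ℕ∞)) le_rfl).clm_apply contDiff_const
  exact ((hφi.fderiv_right (m := (⊤ : ℕ∞)) le_rfl).clm_apply contDiff_const).continuous

lemma isClosed_setOf_isDistLaplacianOn {G : Set E2} (hG : IsOpen G)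
    (hGb : Bornology.IsBounded G) :
    IsClosed {r : (↥(closure G) →ᵇ ℝ) × (↥(closure G) →ᵇ ℝ) |
      IsDistLaplacianOn G (extendByZero G r.1) (extendByZero G r.2)} := by
  have hint : ∀ {ψ : E2 → ℝ}, Continuous ψ → IntegrableOn ψ G := fun hψ =>
    (hψ.continuousOn.integrableOn_compact hGb.isCompact_closure).mono_set subset_closure
  simp only [IsDistLaplacianOn, ofPred_forall]
  refine isClosed_iInter fun φ => isClosed_iInter fun hφ =>
    isClosed_iInter fun _ => isClosed_iInter fun _ => isClosed_eq ?_ ?_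
  · exact (lipschitzWith_setIntegral_extendByZero_mul hG.measurableSet
      (hint (continuous_lap hφ))).continuous.comp continuous_fst
  · exact (lipschitzWith_setIntegral_extendByZero_mul hG.measurableSet
      (hint hφ.continuous)).continuous.comp continuous_snd

lemma IsDistLaplacianOn.ae_eq {G : Set E2} {u f g : E2 → ℝ} (hG : IsOpen G)
    (hf : IntegrableOn f G) (hg : IntegrableOn g G)
    (hfu : IsDistLaplacianOn G u f) (hgu : IsDistLaplacianOn G u g) :
    f =ᵐ[volume.restrict G] g := by
  have hzero := hG.ae_eq_zero_of_integral_contDiff_smul_eq_zero (f := f - g)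
    (hf.sub hg).locallyIntegrableOn fun φ hφ hφc hφG => ?_
  · filter_upwards [(ae_restrict_iff' hG.measurableSet).2 hzero] with x hx
    exact sub_eq_zero.mp hx
  obtain ⟨C, hC⟩ := hφ.continuous.bounded_above_of_compact_support hφc
  have hmul : ∀ {h : E2 → ℝ}, IntegrableOn h G → IntegrableOn (fun x => h x * φ x) G :=
    fun hh => hh.mul_bdd hφ.continuous.aestronglyMeasurable (ae_of_all _ hC)
  have hφ_off : ∀ x ∉ G, φ x • (f - g) x = 0 := fun x hx => by
    rw [image_eq_zero_of_notMem_tsupport fun h => hx (hφG h), zero_smul]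
  calc ∫ x, φ x • (f - g) x
      = (∫ x in G, f x * φ x) - ∫ x in G, g x * φ x := by
        rw [← setIntegral_eq_integral_of_forall_compl_eq_zero hφ_off,
          ← integral_sub (hmul hf) (hmul hg)]
        simp only [Pi.sub_apply, smul_eq_mul, mul_comm (φ _), sub_mul]
    _ = 0 := by rw [← hfu φ hφ hφc hφG, ← hgu φ hφ hφc hφG, sub_self]

/-- The operator `P2 u = Δu` with domain `{u ∈ C2(Ḡ) : Δu ∈ C2(Ḡ)}` admits a closure
in the Banach space `C2(Ḡ)`: the closure of its graph is again the graph of a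
(single-valued) operator. -/
theorem P2_admits_closure (S : Setting2) :
    ∀ p ∈ closure S.graphP, ∀ q ∈ closure S.graphP, p.1 = q.1 → p.2 = q.2 := by
  have hlap : closure S.graphP ⊆ {r | IsDistLaplacianOn S.G
      (extendByZero S.G r.1) (extendByZero S.G r.2)} :=
    closure_minimal (fun r hr => hr.2.2) (isClosed_setOf_isDistLaplacianOn S.hG_open S.hG_bdd)
  intro p hp q hq hpq
  have hint := integrableOn_extendByZero S.hG_open.measurableSet S.hG_bdd
  have hae := IsDistLaplacianOn.ae_eq S.hG_open (hint p.2) (hint q.2) (hlap hp) (hpq ▸ hlap hq)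
  refine eq_of_eqOn_extendByZero (Measure.eqOn_of_ae_eq hae ?_ ?_ ?_)
  · exact (continuousOn_extendByZero p.2).mono subset_closure
  · exact (continuousOn_extendByZero q.2).mono subset_closure
  · rw [S.hG_open.interior_eq]; exact subset_closure
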